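/- arXiv:2601.21668 — 2 statements merged into one kernel-verified Lean document; each statement's English description precedes it below -/
import Mathlib

section
/- Let τ > 0, N a natural number, and for k = 1,…,N let E_k⁰, E_k¹ : ℝ → ℝ be continuous functions; let Ψ_N be the NuFI composite map of the corresponding backward Störmer–Verlet steps. Let f₀ : ℝ × ℝ → ℝ be integrable with respect to the volume measure on ℝ × ℝ. Then ∫∫ f₀(Ψ_N(x,v)) dx dv = ∫∫ f₀(x,v) dx dv (conservation of total mass by the NuFI discrete solution). -/
open MeasureTheory

/-- The backward Störmer–Verlet step for the Vlasov–Poisson characteristics. -/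
noncomputable def svStep (τ : ℝ) (E0 E1 : ℝ → ℝ) : ℝ × ℝ → ℝ × ℝ :=
  fun p =>
    let vhalf := p.2 + (τ / 2) * E1 p.1
    let x1 := p.1 - τ * vhalf
    (x1, vhalf + (τ / 2) * E0 x1)

/-- The NuFI composite map `Ψ_N = Ψ⁽¹⁾ ∘ Ψ⁽²⁾ ∘ ⋯ ∘ Ψ⁽ᴺ⁾`. -/
noncomputable def nufiComp (τ : ℝ) (E0 E1 : ℕ → ℝ → ℝ) : ℕ → (ℝ × ℝ → ℝ × ℝ)
  | 0 => id
  | n + 1 => nufiComp τ E0 E1 n ∘ svStep τ (E0 (n + 1)) (E1 (n + 1))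

lemma shearV_mp (g : ℝ → ℝ) (hg : Measurable g) :
    MeasurePreserving (fun p : ℝ × ℝ => (p.1, p.2 + g p.1)) volume volume := by
  have := (MeasurePreserving.id (volume : Measure ℝ)).skew_product
    (g := fun x v => v + g x)
    (by exact measurable_snd.add (hg.comp measurable_fst))
    (Filter.Eventually.of_forall fun x => map_add_right_eq_self volume (g x))
  simpa [Measure.volume_eq_prod] using this

lemma shearX_mp (c : ℝ) :
    MeasurePreserving (fun p : ℝ × ℝ => (p.1 + c * p.2, p.2)) volume volume := by
  have h1 : MeasurePreserving (Prod.swap : ℝ × ℝ → ℝ × ℝ) volume volume := by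
    simpa [Measure.volume_eq_prod] using
      (Measure.measurePreserving_swap (μ := (volume : Measure ℝ)) (ν := (volume : Measure ℝ)))
  have h2 := shearV_mp (fun x => c * x) (measurable_const_mul c)
  have := h1.comp (h2.comp h1)
  have heq : (Prod.swap ∘ (fun p : ℝ × ℝ => (p.1, p.2 + c * p.1)) ∘ Prod.swap)
      = fun p : ℝ × ℝ => (p.1 + c * p.2, p.2) := by
    funext p; rfl
  rwa [heq] at this

lemma svStep_mp (τ : ℝ) (E0 E1 : ℝ → ℝ) (h0 : Continuous E0) (h1 : Continuous E1) :
    MeasurePreserving (svStep τ E0 E1) volume volume := by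
  have hA := shearV_mp (fun x => (τ / 2) * E1 x)
    ((measurable_const_mul _).comp h1.measurable)
  have hB := shearX_mp (-τ)
  have hC := shearV_mp (fun x => (τ / 2) * E0 x)
    ((measurable_const_mul _).comp h0.measurable)
  have := hC.comp (hB.comp hA)
  have heq : ((fun p : ℝ × ℝ => (p.1, p.2 + (τ / 2) * E0 p.1)) ∘
      (fun p : ℝ × ℝ => (p.1 + (-τ) * p.2, p.2)) ∘
      (fun p : ℝ × ℝ => (p.1, p.2 + (τ / 2) * E1 p.1))) = svStep τ E0 E1 := by
    funext p
    simp only [svStep, Function.comp]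
    rw [Prod.mk.injEq]
    have : p.1 + -τ * (p.2 + τ / 2 * E1 p.1) = p.1 - τ * (p.2 + τ / 2 * E1 p.1) := by ring
    rw [this]
    exact ⟨rfl, rfl⟩
  rwa [heq] at this

lemma nufiComp_mp (τ : ℝ) (E0 E1 : ℕ → ℝ → ℝ) (N : ℕ)
    (hE0 : ∀ k, 1 ≤ k → k ≤ N → Continuous (E0 k))
    (hE1 : ∀ k, 1 ≤ k → k ≤ N → Continuous (E1 k)) :
    MeasurePreserving (nufiComp τ E0 E1 N) volume volume := by
  induction N with
  | zero => exact MeasurePreserving.id _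
  | succ n ih =>
    exact (ih (fun k h1 h2 => hE0 k h1 (h2.trans (Nat.le_succ n)))
        (fun k h1 h2 => hE1 k h1 (h2.trans (Nat.le_succ n)))).comp
      (svStep_mp τ _ _ (hE0 (n + 1) (Nat.succ_le_succ (Nat.zero_le n)) le_rfl)
        (hE1 (n + 1) (Nat.succ_le_succ (Nat.zero_le n)) le_rfl))

/-- Conservation of total mass by the NuFI discrete solution. -/
theorem nufi_mass_conservation (τ : ℝ) (hτ : 0 < τ) (N : ℕ) (E0 E1 : ℕ → ℝ → ℝ)
    (hE0 : ∀ k, 1 ≤ k → k ≤ N → Continuous (E0 k))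
    (hE1 : ∀ k, 1 ≤ k → k ≤ N → Continuous (E1 k))
    (f₀ : ℝ × ℝ → ℝ) (hf₀ : Integrable f₀ (volume : Measure (ℝ × ℝ))) :
    ∫ p : ℝ × ℝ, f₀ (nufiComp τ E0 E1 N p) = ∫ p : ℝ × ℝ, f₀ p := by
  have h := nufiComp_mp τ E0 E1 N hE0 hE1
  rw [← integral_map h.measurable.aemeasurable
    (by rw [h.map_eq]; exact hf₀.aestronglyMeasurable), h.map_eq]
end

section
/- Let τ > 0, N a natural number, and for k = 1,…,N let E_k⁰, E_k¹ : ℝ → ℝ be continuous functions; let Ψ_N be the NuFI composite map of the corresponding backward Störmer–Verlet steps. Let f₀ : ℝ × ℝ → ℝ be square-integrable with respect to the volume measure on ℝ × ℝ. Then ∫∫ (f₀(Ψ_N(x,v)))² dx dv = ∫∫ (f₀(x,v))² dx dv (conservation of the L²-norm by the NuFI discrete solution). -/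
open MeasureTheory

/-! Each Störmer–Verlet step is a composition of three shears, each translating one coordinate
by a function of the other; by Fubini and translation invariance a shear preserves Lebesgue
measure, hence so does `Ψ_N`, and the change of variables `p ↦ Ψ_N p` leaves `∫ f₀²` unchanged. -/

theorem MeasureTheory.MeasurePreserving.integral_comp_of_aestronglyMeasurable
    {α β E : Type*} [MeasurableSpace α] [MeasurableSpace β] [NormedAddCommGroup E]
    [NormedSpace ℝ E] {μ : Measure α} {ν : Measure β} {f : α → β} {g : β → E}
    (hf : MeasurePreserving f μ ν) (hg : AEStronglyMeasurable g ν) :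
    ∫ x, g (f x) ∂μ = ∫ y, g y ∂ν := by
  rw [← hf.map_eq] at hg ⊢
  exact (integral_map hf.aemeasurable hg).symm

section Shear

variable {α G : Type*} [MeasurableSpace α] [MeasurableSpace G] [AddGroup G] [MeasurableAdd₂ G]
  (μ : Measure α) (ν : Measure G) [SFinite μ] [SFinite ν] [ν.IsAddRightInvariant]
  {c : α → G}

theorem measurePreserving_shear_snd (hc : Measurable c) :
    MeasurePreserving (fun p : α × G => (p.1, p.2 + c p.1)) (μ.prod ν) (μ.prod ν) :=
  (MeasurePreserving.id μ).skew_product (measurable_snd.add (hc.comp measurable_fst))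
    (ae_of_all _ fun x => map_add_right_eq_self ν (c x))

theorem measurePreserving_shear_fst (hc : Measurable c) :
    MeasurePreserving (fun p : G × α => (p.1 + c p.2, p.2)) (ν.prod μ) (ν.prod μ) :=
  (Measure.measurePreserving_swap (μ := μ) (ν := ν)).comp
    ((measurePreserving_shear_snd μ ν hc).comp Measure.measurePreserving_swap)

end Shear

theorem svStep_eq_shear_comp (τ : ℝ) (E0 E1 : ℝ → ℝ) :
    svStep τ E0 E1 =
      (fun p : ℝ × ℝ => (p.1, p.2 + τ / 2 * E0 p.1)) ∘
      (fun p : ℝ × ℝ => (p.1 + -τ * p.2, p.2)) ∘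
      (fun p : ℝ × ℝ => (p.1, p.2 + τ / 2 * E1 p.1)) := by
  funext p
  simp only [svStep, Function.comp_apply, neg_mul, ← sub_eq_add_neg]

theorem measurePreserving_svStep (τ : ℝ) {E0 E1 : ℝ → ℝ} (hE0 : Measurable E0)
    (hE1 : Measurable E1) : MeasurePreserving (svStep τ E0 E1) volume volume := by
  rw [svStep_eq_shear_comp, Measure.volume_eq_prod]
  exact (measurePreserving_shear_snd _ _ (c := fun x => τ / 2 * E0 x) (by fun_prop)).comp
    ((measurePreserving_shear_fst _ _ (c := fun v => -τ * v) (by fun_prop)).comp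
      (measurePreserving_shear_snd _ _ (c := fun x => τ / 2 * E1 x) (by fun_prop)))

theorem measurePreserving_nufiComp (τ : ℝ) (E0 E1 : ℕ → ℝ → ℝ) (N : ℕ)
    (hE0 : ∀ k, 1 ≤ k → k ≤ N → Measurable (E0 k))
    (hE1 : ∀ k, 1 ≤ k → k ≤ N → Measurable (E1 k)) :
    MeasurePreserving (nufiComp τ E0 E1 N) volume volume := by
  induction N with
  | zero => exact MeasurePreserving.id _
  | succ n ih =>
    exact (ih (fun k h1 h2 => hE0 k h1 (by omega)) (fun k h1 h2 => hE1 k h1 (by omega))).comp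
      (measurePreserving_svStep τ (hE0 _ (by omega) le_rfl) (hE1 _ (by omega) le_rfl))

theorem nufi_L2_conservation_general (τ : ℝ) (N : ℕ) (E0 E1 : ℕ → ℝ → ℝ)
    (hE0 : ∀ k, 1 ≤ k → k ≤ N → Continuous (E0 k))
    (hE1 : ∀ k, 1 ≤ k → k ≤ N → Continuous (E1 k))
    (f₀ : ℝ × ℝ → ℝ)
    (hf₀ : MemLp f₀ 2 (volume : Measure (ℝ × ℝ))) :
    ∫ p : ℝ × ℝ, (f₀ (nufiComp τ E0 E1 N p)) ^ 2 = ∫ p : ℝ × ℝ, (f₀ p) ^ 2 :=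
  (measurePreserving_nufiComp τ E0 E1 N (fun k h1 h2 => (hE0 k h1 h2).measurable)
    (fun k h1 h2 => (hE1 k h1 h2).measurable)).integral_comp_of_aestronglyMeasurable
    (hf₀.aestronglyMeasurable.pow 2)

/-- Conservation of the $L^2$-norm by the NuFI discrete solution. -/
theorem nufi_L2_conservation (τ : ℝ) (hτ : 0 < τ) (N : ℕ) (E0 E1 : ℕ → ℝ → ℝ)
    (hE0 : ∀ k, 1 ≤ k → k ≤ N → Continuous (E0 k))
    (hE1 : ∀ k, 1 ≤ k → k ≤ N → Continuous (E1 k))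
    (f₀ : ℝ × ℝ → ℝ)
    (hf₀ : MemLp f₀ 2 (volume : Measure (ℝ × ℝ))) :
    ∫ p : ℝ × ℝ, (f₀ (nufiComp τ E0 E1 N p)) ^ 2 = ∫ p : ℝ × ℝ, (f₀ p) ^ 2 :=
  nufi_L2_conservation_general τ N E0 E1 hE0 hE1 f₀ hf₀
end
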